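/- Let G be a Garside group, r a natural number, p, q ∈ ℤ^r, and v ∈ [p,q] ⊆ G^r. Then the set {s ∈ S : v^s ∈ [p,q]} is closed under greatest common left divisors (if s, t belong to it, so does s ∧ t). Consequently, for every atom x of G⁺, if the set {s ∈ S : x ≼ s and v^s ∈ [p,q]} is nonempty, then it has a unique ≼-minimal element. -/

import Mathlib

/-- A Garside structure on a group `G`: a submonoid `G⁺` of positive elements
together with a Garside element `Δ`, satisfying the Garside axioms. -/
structure GarsideStructure (G : Type*) [Group G] where
  /-- the monoid `G⁺` of positive elements -/
  pos : Submonoid G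
  /-- the Garside element `Δ` -/
  Δ : G
  delta_mem : Δ ∈ pos
  /-- `G⁺` is Noetherian -/
  noetherian : ∀ a ∈ pos, ∃ n : ℕ, ∀ l : List G,
    (∀ x ∈ l, x ∈ pos ∧ x ≠ 1) → l.prod = a → l.length ≤ n
  /-- any two elements of `G⁺` admit a least common right multiple (w.r.t. `≼`) -/
  lcm_right : ∀ a ∈ pos, ∀ b ∈ pos, ∃ m ∈ pos,
    a⁻¹ * m ∈ pos ∧ b⁻¹ * m ∈ pos ∧
      ∀ c ∈ pos, a⁻¹ * c ∈ pos → b⁻¹ * c ∈ pos → m⁻¹ * c ∈ pos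
  /-- any two elements of `G⁺` admit a least common left multiple (w.r.t. `≽`) -/
  lcm_left : ∀ a ∈ pos, ∀ b ∈ pos, ∃ m ∈ pos,
    m * a⁻¹ ∈ pos ∧ m * b⁻¹ ∈ pos ∧
      ∀ c ∈ pos, c * a⁻¹ ∈ pos → c * b⁻¹ ∈ pos → c * m⁻¹ ∈ pos
  /-- `G` is the group of fractions of `G⁺` -/
  fractions : ∀ g : G, ∃ a ∈ pos, ∃ b ∈ pos, g = a⁻¹ * b
  /-- `Δ` is balanced: its left divisors in `G⁺` coincide with its right divisors -/
  balanced : ∀ s ∈ pos, (s⁻¹ * Δ ∈ pos ↔ Δ * s⁻¹ ∈ pos)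
  /-- the set of simple elements (divisors of `Δ`) is finite -/
  simples_finite : {s : G | s ∈ pos ∧ s⁻¹ * Δ ∈ pos}.Finite
  /-- the simple elements generate `G⁺` -/
  simples_generate : Submonoid.closure {s : G | s ∈ pos ∧ s⁻¹ * Δ ∈ pos} = pos

namespace GarsideStructure

variable {G : Type*} [Group G]

/-- `a ≼ b` : left divisibility. -/
def LeftDvd (Γ : GarsideStructure G) (a b : G) : Prop := a⁻¹ * b ∈ Γ.pos

/-- `b ≽ a` : right divisibility. -/
def RightDvd (Γ : GarsideStructure G) (b a : G) : Prop := b * a⁻¹ ∈ Γ.pos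

/-- a simple element: a divisor of `Δ`. -/
def Simple (Γ : GarsideStructure G) (s : G) : Prop := s ∈ Γ.pos ∧ Γ.LeftDvd s Γ.Δ

/-- an atom of `G⁺`. -/
def Atom (Γ : GarsideStructure G) (a : G) : Prop :=
  a ∈ Γ.pos ∧ a ≠ 1 ∧ ∀ b ∈ Γ.pos, ∀ c ∈ Γ.pos, a = b * c → b = 1 ∨ c = 1

/-- the iterated automorphism `τ^k`, where `τ(x) = Δ⁻¹xΔ`; so `τ^k(x) = Δ^(-k) x Δ^k`. -/
def tau (Γ : GarsideStructure G) (k : ℤ) (x : G) : G := Γ.Δ ^ (-k) * x * Γ.Δ ^ k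

/-- `d` is the greatest common left divisor (`∧`) of `a` and `b`. -/
def IsLeftGcd (Γ : GarsideStructure G) (d a b : G) : Prop :=
  d ∈ Γ.pos ∧ Γ.LeftDvd d a ∧ Γ.LeftDvd d b ∧
    ∀ c ∈ Γ.pos, Γ.LeftDvd c a → Γ.LeftDvd c b → Γ.LeftDvd c d

/-- `d` is the greatest common right divisor (`⋀̃`) of `a` and `b`. -/
def IsRightGcd (Γ : GarsideStructure G) (d a b : G) : Prop :=
  d ∈ Γ.pos ∧ Γ.RightDvd a d ∧ Γ.RightDvd b d ∧
    ∀ c ∈ Γ.pos, Γ.RightDvd a c → Γ.RightDvd b c → Γ.RightDvd d c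

/-- membership of a tuple `a ∈ Gʳ` in the interval `[p,q]`:
`pᵢ ≤ inf aᵢ` (i.e. `Δ^pᵢ ≼ aᵢ`) and `sup aᵢ ≤ qᵢ` (i.e. `aᵢ ≼ Δ^qᵢ`) for all `i`. -/
def InInterval (Γ : GarsideStructure G) {r : ℕ} (p q : Fin r → ℤ) (a : Fin r → G) : Prop :=
  ∀ i, Γ.LeftDvd (Γ.Δ ^ (p i)) (a i) ∧ Γ.LeftDvd (a i) (Γ.Δ ^ (q i))

/-- `‖a‖`: the maximal number of atoms in an expression of `a` as a product of atoms. -/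
noncomputable def anorm (Γ : GarsideStructure G) (a : G) : ℕ :=
  sSup {n | ∃ l : List G, (∀ x ∈ l, Γ.Atom x) ∧ l.prod = a ∧ l.length = n}

end GarsideStructure

/-!
Left divisibility `≼` is a partial order on `G` in which every nonempty set of positive elements
has a meet, and it is invariant under left multiplication by any element and under right
multiplication by powers of `Δ` (conjugation by `Δ` preserves `G⁺`). For a positive `s`, the
condition `vˢ ∈ [p,q]` reads `s Δ^{pᵢ} ≼ vᵢ s` and `vᵢ s ≼ s Δ^{qᵢ}`. Both sides of each
inequality are images of `s` under such order automorphisms, so the inequalities pass to meets.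
The `≼`-minimal element of `{s ∈ S : x ≼ s, vˢ ∈ [p,q]}` is then the meet of that set.
-/

namespace GarsideStructure

variable {G : Type*} [Group G] (Γ : GarsideStructure G)

theorem leftDvd_trans {a b c : G} (hab : Γ.LeftDvd a b) (hbc : Γ.LeftDvd b c) :
    Γ.LeftDvd a c := by
  have h : a⁻¹ * c = (a⁻¹ * b) * (b⁻¹ * c) := by group
  rw [LeftDvd, h]
  exact Γ.pos.mul_mem hab hbc

theorem leftDvd_mul_left_iff (c : G) {a b : G} :
    Γ.LeftDvd (c * a) (c * b) ↔ Γ.LeftDvd a b := by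
  rw [LeftDvd, LeftDvd, show (c * a)⁻¹ * (c * b) = a⁻¹ * b by group]

theorem leftDvd_conj_iff (a g s : G) :
    Γ.LeftDvd a (s⁻¹ * g * s) ↔ Γ.LeftDvd (s * a) (g * s) := by
  rw [← Γ.leftDvd_mul_left_iff s, show s * (s⁻¹ * g * s) = g * s by group]

theorem conj_leftDvd_iff (a g s : G) :
    Γ.LeftDvd (s⁻¹ * g * s) a ↔ Γ.LeftDvd (g * s) (s * a) := by
  rw [← Γ.leftDvd_mul_left_iff s, show s * (s⁻¹ * g * s) = g * s by group]

theorem map_mem_of_forall_simple {f : G →* G} (hf : ∀ s, Γ.Simple s → f s ∈ Γ.pos) {x : G}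
    (hx : x ∈ Γ.pos) : f x ∈ Γ.pos := by
  rw [← Γ.simples_generate] at hx
  exact (Submonoid.closure_le (S := Γ.pos.comap f)).2 hf hx

theorem delta_inv_mul_mul_delta_mem {x : G} (hx : x ∈ Γ.pos) : Γ.Δ⁻¹ * x * Γ.Δ ∈ Γ.pos := by
  have key := Γ.map_mem_of_forall_simple (f := (MulAut.conj Γ.Δ⁻¹).toMonoidHom) ?_ hx
  · simpa using key
  rintro s ⟨hs, hsΔ⟩
  have hu : Γ.Δ * (s⁻¹ * Γ.Δ)⁻¹ ∈ Γ.pos := by simpa [mul_assoc] using hs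
  simpa [mul_assoc] using (Γ.balanced _ hsΔ).2 hu

theorem delta_mul_mul_delta_inv_mem {x : G} (hx : x ∈ Γ.pos) : Γ.Δ * x * Γ.Δ⁻¹ ∈ Γ.pos := by
  have key := Γ.map_mem_of_forall_simple (f := (MulAut.conj Γ.Δ).toMonoidHom) ?_ hx
  · simpa using key
  rintro s ⟨hs, hsΔ⟩
  have hw : Γ.Δ * s⁻¹ ∈ Γ.pos := (Γ.balanced s hs).1 hsΔ
  have hw' : (Γ.Δ * s⁻¹)⁻¹ * Γ.Δ ∈ Γ.pos := by simpa [mul_assoc] using hs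
  simpa [mul_assoc] using (Γ.balanced _ hw).1 hw'

theorem tau_mem (k : ℤ) {x : G} (hx : x ∈ Γ.pos) : Γ.tau k x ∈ Γ.pos := by
  induction k using Int.induction_on with
  | zero => simpa [tau] using hx
  | succ n ih =>
    have h : Γ.tau (n + 1) x = Γ.Δ⁻¹ * Γ.tau n x * Γ.Δ := by unfold tau; group
    exact h ▸ Γ.delta_inv_mul_mul_delta_mem ih
  | pred n ih =>
    have h : Γ.tau (-n - 1) x = Γ.Δ * Γ.tau (-n) x * Γ.Δ⁻¹ := by unfold tau; group
    exact h ▸ Γ.delta_mul_mul_delta_inv_mem ih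

theorem tau_mem_iff (k : ℤ) {x : G} : Γ.tau k x ∈ Γ.pos ↔ x ∈ Γ.pos := by
  refine ⟨fun h => ?_, Γ.tau_mem k⟩
  have hx : x = Γ.tau (-k) (Γ.tau k x) := by unfold tau; group
  exact hx ▸ Γ.tau_mem (-k) h

theorem leftDvd_mul_zpow_delta_iff (k : ℤ) {a b : G} :
    Γ.LeftDvd (a * Γ.Δ ^ k) (b * Γ.Δ ^ k) ↔ Γ.LeftDvd a b := by
  have h : (a * Γ.Δ ^ k)⁻¹ * (b * Γ.Δ ^ k) = Γ.tau k (a⁻¹ * b) := by unfold tau; group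
  rw [LeftDvd, LeftDvd, h, tau_mem_iff]

def factorLengths (a : G) : Set ℕ :=
  {n | ∃ l : List G, (∀ x ∈ l, x ∈ Γ.pos ∧ x ≠ 1) ∧ l.prod = a ∧ l.length = n}

noncomputable def factorLength (a : G) : ℕ := sSup (Γ.factorLengths a)

theorem bddAbove_factorLengths {a : G} (ha : a ∈ Γ.pos) : BddAbove (Γ.factorLengths a) := by
  obtain ⟨n, hn⟩ := Γ.noetherian a ha
  exact ⟨n, fun _ ⟨l, hl, hprod, hlen⟩ => hlen ▸ hn l hl hprod⟩

theorem factorLengths_nonempty {a : G} (ha : a ∈ Γ.pos) : (Γ.factorLengths a).Nonempty := by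
  by_cases h : a = 1
  · exact ⟨0, [], by simp, by simp [h], rfl⟩
  · exact ⟨1, [a], by simp [ha, h], by simp, rfl⟩

theorem factorLength_lt {a b : G} (ha : a ∈ Γ.pos) (hab : Γ.LeftDvd a b) (hne : a ≠ b) :
    Γ.factorLength a < Γ.factorLength b := by
  have hb : b ∈ Γ.pos := by simpa using Γ.pos.mul_mem ha hab
  obtain ⟨l, hl, hprod, hlen⟩ :=
    Nat.sSup_mem (Γ.factorLengths_nonempty ha) (Γ.bddAbove_factorLengths ha)
  have hmem : Γ.factorLength a + 1 ∈ Γ.factorLengths b := by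
    refine ⟨l ++ [a⁻¹ * b], ?_, by simp [hprod], by simp [hlen, factorLength]⟩
    simp only [List.mem_append, List.mem_singleton]
    rintro x (hx | rfl)
    · exact hl x hx
    · exact ⟨hab, fun h => hne (inv_mul_eq_one.1 h)⟩
  exact le_csSup (Γ.bddAbove_factorLengths hb) hmem

theorem factorLength_le {a b : G} (ha : a ∈ Γ.pos) (hab : Γ.LeftDvd a b) :
    Γ.factorLength a ≤ Γ.factorLength b := by
  rcases eq_or_ne a b with rfl | hne
  · exact le_rfl
  · exact (Γ.factorLength_lt ha hab hne).le

theorem leftDvd_antisymm {a b : G} (hab : Γ.LeftDvd a b) (hba : Γ.LeftDvd b a) : a = b := by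
  set u := a⁻¹ * b
  have hu : Γ.LeftDvd 1 u := by simpa [LeftDvd] using hab
  have hu' : Γ.LeftDvd u 1 := by simpa [LeftDvd, u] using hba
  by_contra hne
  have hu1 : u ≠ 1 := fun h => hne (inv_mul_eq_one.1 h)
  exact lt_asymm (Γ.factorLength_lt Γ.pos.one_mem hu hu1.symm)
    (Γ.factorLength_lt hab hu' hu1)

/-- Unlike in `IsLeftGcd`, the lower bounds range over all of `G`, not only over `G⁺`. -/
def IsLeftInf (C : Set G) (d : G) : Prop :=
  (∀ s ∈ C, Γ.LeftDvd d s) ∧ ∀ c, (∀ s ∈ C, Γ.LeftDvd c s) → Γ.LeftDvd c d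

/-- For `c = a⁻¹ b` with `a, b ∈ G⁺`, the witness is `a⁻¹ (b ∨ a)`, the join of `c` and `1`. -/
theorem exists_pos_least_leftMultiple (c : G) :
    ∃ e ∈ Γ.pos, Γ.LeftDvd c e ∧ ∀ s ∈ Γ.pos, Γ.LeftDvd c s → Γ.LeftDvd e s := by
  obtain ⟨a, ha, b, hb, rfl⟩ := Γ.fractions c
  obtain ⟨m, -, hbm, ham, hmin⟩ := Γ.lcm_right b hb a ha
  refine ⟨a⁻¹ * m, ham, by simpa [LeftDvd] using hbm, fun s hs hcs => ?_⟩
  have has : a * s ∈ Γ.pos := Γ.pos.mul_mem ha hs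
  have hms := hmin (a * s) has (by simpa [LeftDvd, mul_assoc] using hcs) (by simpa using hs)
  simpa [LeftDvd, mul_assoc] using hms

theorem isLeftInf_of_pos {C : Set G} {d : G} (hC : C ⊆ Γ.pos) (hd : ∀ s ∈ C, Γ.LeftDvd d s)
    (huniv : ∀ c ∈ Γ.pos, (∀ s ∈ C, Γ.LeftDvd c s) → Γ.LeftDvd c d) : Γ.IsLeftInf C d := by
  refine ⟨hd, fun c hc => ?_⟩
  obtain ⟨e, he, hce, hmin⟩ := Γ.exists_pos_least_leftMultiple c
  exact Γ.leftDvd_trans hce (huniv e he fun s hs => hmin s (hC hs) (hc s hs))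

theorem exists_isLeftInf {C : Set G} (hC : C ⊆ Γ.pos) (hne : C.Nonempty) :
    ∃ d ∈ Γ.pos, Γ.IsLeftInf C d := by
  obtain ⟨s₀, hs₀⟩ := hne
  set D := {c | c ∈ Γ.pos ∧ ∀ s ∈ C, Γ.LeftDvd c s}
  have hD : Γ.factorLength '' D ⊆ Set.Iic (Γ.factorLength s₀) := by
    rintro _ ⟨c, hc, rfl⟩
    exact Γ.factorLength_le hc.1 (hc.2 s₀ hs₀)
  have h1D : (1 : G) ∈ D := ⟨Γ.pos.one_mem, fun s hs => by simpa [LeftDvd] using hC hs⟩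
  obtain ⟨_, ⟨d, hdD, rfl⟩, hdmax⟩ :=
    (bddAbove_Iic.mono hD).exists_isGreatest_of_nonempty (Set.Nonempty.image _ ⟨1, h1D⟩)
  refine ⟨d, hdD.1, Γ.isLeftInf_of_pos hC hdD.2 fun c hc hcC => ?_⟩
  obtain ⟨m, hm, hcm, hdm, hmin⟩ := Γ.lcm_right c hc d hdD.1
  have hmD : m ∈ D := ⟨hm, fun s hs => hmin s (hC hs) (hcC s hs) (hdD.2 s hs)⟩
  -- maximality of the factor length of `d` forces `d = c ∨ d`
  obtain rfl : d = m := by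
    by_contra hne
    exact (hdmax ⟨m, hmD, rfl⟩).not_gt (Γ.factorLength_lt hdD.1 hdm hne)
  exact hcm

variable {Γ}

theorem IsLeftGcd.isLeftInf {d s t : G} (h : Γ.IsLeftGcd d s t) (hs : s ∈ Γ.pos)
    (ht : t ∈ Γ.pos) : Γ.IsLeftInf {s, t} d := by
  obtain ⟨-, hds, hdt, huniv⟩ := h
  refine Γ.isLeftInf_of_pos (by simp [Set.insert_subset_iff, hs, ht]) (by simp [hds, hdt]) ?_
  exact fun c hc hcst => huniv c hc (hcst s (by simp)) (hcst t (by simp))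

theorem IsLeftInf.image {C : Set G} {d : G} (h : Γ.IsLeftInf C d) {f : G → G}
    (hf : Function.Surjective f) (hfdvd : ∀ a b, Γ.LeftDvd (f a) (f b) ↔ Γ.LeftDvd a b) :
    Γ.IsLeftInf (f '' C) (f d) := by
  refine ⟨Set.forall_mem_image.2 fun s hs => (hfdvd _ _).2 (h.1 s hs), fun c hc => ?_⟩
  obtain ⟨c, rfl⟩ := hf c
  exact (hfdvd _ _).2 (h.2 c fun s hs => (hfdvd _ _).1 (hc _ (Set.mem_image_of_mem f hs)))

theorem IsLeftInf.inInterval_conj {r : ℕ} {p q : Fin r → ℤ} {v : Fin r → G} {C : Set G}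
    {d : G} (hd : Γ.IsLeftInf C d) (hC : ∀ s ∈ C, Γ.InInterval p q (fun i => s⁻¹ * v i * s)) :
    Γ.InInterval p q (fun i => d⁻¹ * v i * d) := by
  intro i
  constructor
  · rw [leftDvd_conj_iff]
    have hinf := hd.image (mul_left_surjective (v i)) fun _ _ => Γ.leftDvd_mul_left_iff _
    refine hinf.2 _ (Set.forall_mem_image.2 fun s hs => Γ.leftDvd_trans (b := s * Γ.Δ ^ p i) ?_ ?_)
    · exact (Γ.leftDvd_mul_zpow_delta_iff _).2 (hd.1 s hs)
    · exact (Γ.leftDvd_conj_iff ..).1 (hC s hs i).1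
  · rw [conj_leftDvd_iff]
    have hinf :=
      hd.image (mul_right_surjective (Γ.Δ ^ q i)) fun _ _ => Γ.leftDvd_mul_zpow_delta_iff _
    refine hinf.2 _ (Set.forall_mem_image.2 fun s hs => Γ.leftDvd_trans (b := v i * s) ?_ ?_)
    · exact (Γ.leftDvd_mul_left_iff _).2 (hd.1 s hs)
    · exact (Γ.conj_leftDvd_iff ..).1 (hC s hs i).2

end GarsideStructure

theorem simple_conjugators_gcd_closed_general {G : Type*} [Group G] (Γ : GarsideStructure G)
    (r : ℕ) (p q : Fin r → ℤ) (v : Fin r → G) :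
    (∀ s t d : G,
      (Γ.Simple s ∧ Γ.InInterval p q (fun i => s⁻¹ * v i * s)) →
      (Γ.Simple t ∧ Γ.InInterval p q (fun i => t⁻¹ * v i * t)) →
      Γ.IsLeftGcd d s t →
      (Γ.Simple d ∧ Γ.InInterval p q (fun i => d⁻¹ * v i * d))) ∧
    (∀ x : G, Γ.Atom x →
      {s : G | Γ.Simple s ∧ Γ.LeftDvd x s ∧
        Γ.InInterval p q (fun i => s⁻¹ * v i * s)}.Nonempty →
      ∃! m : G,
        (Γ.Simple m ∧ Γ.LeftDvd x m ∧ Γ.InInterval p q (fun i => m⁻¹ * v i * m)) ∧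
        ∀ s : G, Γ.Simple s → Γ.LeftDvd x s →
          Γ.InInterval p q (fun i => s⁻¹ * v i * s) → Γ.LeftDvd s m → s = m) := by
  refine ⟨fun s t d ⟨hs, hsv⟩ ⟨ht, htv⟩ hd => ?_, fun x _ hne => ?_⟩
  · exact ⟨⟨hd.1, Γ.leftDvd_trans hd.2.1 hs.2⟩,
      (hd.isLeftInf hs.1 ht.1).inInterval_conj (by simp [hsv, htv])⟩
  · obtain ⟨s₀, hs₀⟩ := hne
    obtain ⟨d, hdpos, hd⟩ := Γ.exists_isLeftInf (fun s hs => hs.1.1) ⟨s₀, hs₀⟩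
    have hdC : Γ.Simple d ∧ Γ.LeftDvd x d ∧ Γ.InInterval p q (fun i => d⁻¹ * v i * d) :=
      ⟨⟨hdpos, Γ.leftDvd_trans (hd.1 s₀ hs₀) hs₀.1.2⟩, hd.2 x fun s hs => hs.2.1,
        hd.inInterval_conj fun s hs => hs.2.2⟩
    refine ⟨d, ⟨hdC, fun s hs hxs hsv hsd => Γ.leftDvd_antisymm hsd (hd.1 s ⟨hs, hxs, hsv⟩)⟩, ?_⟩
    rintro m ⟨hmC, hmin⟩
    exact (hmin d hdC.1 hdC.2.1 hdC.2.2 (hd.1 m hmC)).symm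

/-- The set `{s ∈ S : vˢ ∈ [p,q]}` is closed under greatest common left divisors;
consequently, for every atom `x`, if `{s ∈ S : x ≼ s and vˢ ∈ [p,q]}` is nonempty,
then it has a unique `≼`-minimal element. -/
theorem simple_conjugators_gcd_closed {G : Type*} [Group G] (Γ : GarsideStructure G)
    (r : ℕ) (p q : Fin r → ℤ) (v : Fin r → G) (hv : Γ.InInterval p q v) :
    (∀ s t d : G,
      (Γ.Simple s ∧ Γ.InInterval p q (fun i => s⁻¹ * v i * s)) →
      (Γ.Simple t ∧ Γ.InInterval p q (fun i => t⁻¹ * v i * t)) →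
      Γ.IsLeftGcd d s t →
      (Γ.Simple d ∧ Γ.InInterval p q (fun i => d⁻¹ * v i * d))) ∧
    (∀ x : G, Γ.Atom x →
      {s : G | Γ.Simple s ∧ Γ.LeftDvd x s ∧
        Γ.InInterval p q (fun i => s⁻¹ * v i * s)}.Nonempty →
      ∃! m : G,
        (Γ.Simple m ∧ Γ.LeftDvd x m ∧ Γ.InInterval p q (fun i => m⁻¹ * v i * m)) ∧
        ∀ s : G, Γ.Simple s → Γ.LeftDvd x s →
          Γ.InInterval p q (fun i => s⁻¹ * v i * s) → Γ.LeftDvd s m → s = m) :=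
  simple_conjugators_gcd_closed_general Γ r p q v
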